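/- Let i, j ∈ [n] with i ≠ j, and let a, b ∈ PB be bases of the integer polymatroid P with a ≠ b and a_t = b_t for every t ∈ [n] ∖ {i, j}. Then for every index k > max{i, j}, the index k is internally active with respect to a if and only if k is internally active with respect to b. -/

import Mathlib

open Finset

variable {n : ℕ}

/-- The set of bases of the integer polymatroid with rank function `f` on ground set `Fin n`:
integer vectors `a` with `a i ≥ 0`, `∑_{i ∈ I} a i ≤ f I` for every `I`, and `∑ i, a i = f [n]`.
(The upper bound `a i ≤ f {i}` used for the ambient finite set is implied by the constraints.) -/
noncomputable def PB (n : ℕ) (f : Finset (Fin n) → ℕ) : Finset (Fin n → ℤ) :=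
  (Fintype.piFinset fun i : Fin n => Finset.Icc (0 : ℤ) (f {i})).filter fun a =>
    (∀ I : Finset (Fin n), ∑ j ∈ I, a j ≤ (f I : ℤ)) ∧ ∑ j, a j = (f Finset.univ : ℤ)

/-- A set `I` is tight for `a` if `∑_{i ∈ I} a i = f I`. -/
def Tight (f : Finset (Fin n) → ℕ) (a : Fin n → ℤ) (I : Finset (Fin n)) : Prop :=
  ∑ i ∈ I, a i = (f I : ℤ)

/-- `i` is internally active with respect to `a`: `a - e_i + e_j ∉ PB` for every `j < i`. -/
def IntAct (f : Finset (Fin n) → ℕ) (a : Fin n → ℤ) (i : Fin n) : Prop :=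
  ∀ j : Fin n, j < i → a - Pi.single i 1 + Pi.single j 1 ∉ PB n f

/-- `i` is externally active with respect to `a`: `a + e_i - e_j ∉ PB` for every `j < i`. -/
def ExtAct (f : Finset (Fin n) → ℕ) (a : Fin n → ℤ) (i : Fin n) : Prop :=
  ∀ j : Fin n, j < i → a + Pi.single i 1 - Pi.single j 1 ∉ PB n f

open scoped Classical in
/-- `Int(a)`: the set of internally active indices. -/
noncomputable def IntSet (f : Finset (Fin n) → ℕ) (a : Fin n → ℤ) : Finset (Fin n) :=
  Finset.univ.filter fun i => IntAct f a i

open scoped Classical in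
/-- `Ext(a)`: the set of externally active indices. -/
noncomputable def ExtSet (f : Finset (Fin n) → ℕ) (a : Fin n → ℤ) : Finset (Fin n) :=
  Finset.univ.filter fun i => ExtAct f a i

/-- `ι(a) = |Int(a)|`, the internal activity. -/
noncomputable def iota (f : Finset (Fin n) → ℕ) (a : Fin n → ℤ) : ℕ := (IntSet f a).card

/-- `ε(a) = |Ext(a)|`, the external activity. -/
noncomputable def eps (f : Finset (Fin n) → ℕ) (a : Fin n → ℤ) : ℕ := (ExtSet f a).card

/-! Write `a = b + d • (e_i - e_j)` with `d > 0`, after swapping `a` and `b`. If an exchange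
`a - e_k + e_l` is a basis but neither `b - e_k + e_l` nor `b - e_k + e_i` is, then `b` has
tight sets separating `l` from `k` and `i` from `k`. Their union is tight by submodularity and
contains both `i` and `j`, so `a` and `b` have the same mass on it, which the exchange at `a`
forbids. Since `k > i, j`, the indices `l` and `i` are both admissible witnesses of
non-activity of `k`. -/

section

variable {f : Finset (Fin n) → ℕ} {a b x : Fin n → ℤ} {i j k l : Fin n} {I J : Finset (Fin n)}

lemma mem_PB_iff :
    x ∈ PB n f ↔ (∀ t, 0 ≤ x t) ∧ (∀ I : Finset (Fin n), ∑ t ∈ I, x t ≤ (f I : ℤ)) ∧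
      ∑ t, x t = (f univ : ℤ) := by
  rw [PB, mem_filter, Fintype.mem_piFinset]
  constructor
  · rintro ⟨hx, hI, huniv⟩
    exact ⟨fun t => (mem_Icc.mp (hx t)).1, hI, huniv⟩
  · rintro ⟨hx, hI, huniv⟩
    exact ⟨fun t => mem_Icc.mpr ⟨hx t, by simpa using hI {t}⟩, hI, huniv⟩

lemma sum_add_single_sub_single (x : Fin n → ℤ) (i j : Fin n) (d : ℤ) (I : Finset (Fin n)) :
    ∑ t ∈ I, (x + Pi.single i d - Pi.single j d : Fin n → ℤ) t =
      ∑ t ∈ I, x t + (if i ∈ I then d else 0) - (if j ∈ I then d else 0) := by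
  simp only [Pi.add_apply, Pi.sub_apply]
  rw [sum_sub_distrib, sum_add_distrib, sum_pi_single', sum_pi_single']

lemma exists_eq_add_single_sub_single_of_agree (hij : i ≠ j)
    (hagree : ∀ t, t ≠ i → t ≠ j → a t = b t) (hsum : ∑ t, a t = ∑ t, b t) :
    ∃ d, a = b + Pi.single i d - Pi.single j d := by
  have hdiff : ∑ t, (a t - b t) = (a i - b i) + (a j - b j) :=
    Fintype.sum_eq_add i j hij fun t ht => sub_eq_zero.mpr (hagree t ht.1 ht.2)
  rw [sum_sub_distrib, hsum, sub_self] at hdiff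
  refine ⟨a i - b i, funext fun t => ?_⟩
  rcases eq_or_ne t i with rfl | hti
  · simp [hij]
  rcases eq_or_ne t j with rfl | htj
  · simp [hti]
    linarith
  · simp [hti, htj, hagree t hti htj]

lemma Tight.union (hsub : ∀ I J : Finset (Fin n), f (I ∪ J) + f (I ∩ J) ≤ f I + f J)
    (hx : x ∈ PB n f) (hI : Tight f x I) (hJ : Tight f x J) : Tight f x (I ∪ J) := by
  have hle := (mem_PB_iff.mp hx).2.1
  have hsum : ∑ t ∈ I ∪ J, x t + ∑ t ∈ I ∩ J, x t = ∑ t ∈ I, x t + ∑ t ∈ J, x t :=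
    sum_union_inter
  have hfsub : (f (I ∪ J) : ℤ) + f (I ∩ J) ≤ f I + f J := by exact_mod_cast hsub I J
  unfold Tight at *
  linarith [hle (I ∪ J), hle (I ∩ J)]

lemma sum_lt_of_sub_single_add_single_mem_PB
    (hx : x - Pi.single k 1 + Pi.single l 1 ∈ PB n f) (hl : l ∈ I) (hk : k ∉ I) :
    ∑ t ∈ I, x t < f I := by
  have h := (mem_PB_iff.mp hx).2.1 I
  rw [sub_add_eq_add_sub, sum_add_single_sub_single, if_pos hl, if_neg hk] at h
  linarith

lemma exists_tight_of_sub_single_add_single_notMem_PB (hx : x ∈ PB n f) (hxk : 1 ≤ x k)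
    (h : x - Pi.single k 1 + Pi.single l 1 ∉ PB n f) : ∃ I, l ∈ I ∧ k ∉ I ∧ Tight f x I := by
  obtain ⟨hx0, hxle, hxuniv⟩ := mem_PB_iff.mp hx
  have hnonneg : ∀ t, 0 ≤ (x + Pi.single l 1 - Pi.single k 1 : Fin n → ℤ) t := by
    intro t
    simp only [Pi.add_apply, Pi.sub_apply, Pi.single_apply]
    split_ifs with htl htk <;> first | linarith [hx0 t] | (subst t; linarith)
  rw [mem_PB_iff, sub_add_eq_add_sub] at h
  simp only [sum_add_single_sub_single, mem_univ, if_true, hxuniv, add_sub_cancel_right,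
    hnonneg, implies_true, true_and, and_true, not_forall, not_le] at h
  obtain ⟨I, hI⟩ := h
  have hle := hxle I
  have hl : l ∈ I := by
    by_contra hl
    rw [if_neg hl] at hI
    split_ifs at hI <;> linarith
  have hk : k ∉ I := fun hk => by
    rw [if_pos hl, if_pos hk] at hI
    linarith
  rw [if_pos hl, if_neg hk] at hI
  exact ⟨I, hl, hk, le_antisymm hle (by linarith)⟩

lemma sub_single_add_single_mem_PB_or
    (hsub : ∀ I J : Finset (Fin n), f (I ∪ J) + f (I ∩ J) ≤ f I + f J) (hki : k ≠ i)
    (hlk : l ≠ k) (hb : b ∈ PB n f) {d : ℤ} (hd : 0 < d)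
    (hab : a = b + Pi.single i d - Pi.single j d)
    (hc : a - Pi.single k 1 + Pi.single l 1 ∈ PB n f) :
    b - Pi.single k 1 + Pi.single l 1 ∈ PB n f ∨ b - Pi.single k 1 + Pi.single i 1 ∈ PB n f := by
  have hsum : ∀ I, ∑ t ∈ I, a t = ∑ t ∈ I, b t + (if i ∈ I then d else 0) -
      (if j ∈ I then d else 0) := fun I => by rw [hab, sum_add_single_sub_single]
  have hak : 1 ≤ a k := by
    have := (mem_PB_iff.mp hc).1 k
    simpa [hlk.symm] using this
  have hbk : 1 ≤ b k := by
    have : a k ≤ b k := by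
      simp only [hab, Pi.add_apply, Pi.sub_apply, Pi.single_apply, hki, if_false]
      split_ifs <;> linarith
    linarith
  by_contra! h
  obtain ⟨I₀, hlI₀, hkI₀, hI₀⟩ := exists_tight_of_sub_single_add_single_notMem_PB hb hbk h.1
  obtain ⟨I₁, hiI₁, hkI₁, hI₁⟩ := exists_tight_of_sub_single_add_single_notMem_PB hb hbk h.2
  -- `a` has strictly less mass than `b` on `I₀`, so `I₀` contains `j` but not `i`.
  have hjI₀ : j ∈ I₀ ∧ i ∉ I₀ := by
    have h₀ := sum_lt_of_sub_single_add_single_mem_PB hc hlI₀ hkI₀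
    rw [hsum, ← hI₀] at h₀
    constructor
    · by_contra hj
      rw [if_neg hj] at h₀
      split_ifs at h₀ <;> linarith
    · intro hi
      rw [if_pos hi] at h₀
      split_ifs at h₀ <;> linarith
  have hU := sum_lt_of_sub_single_add_single_mem_PB hc (mem_union_left I₁ hlI₀)
    (notMem_union.mpr ⟨hkI₀, hkI₁⟩)
  rw [hsum, if_pos (mem_union_right I₀ hiI₁), if_pos (mem_union_left I₁ hjI₀.1),
    add_sub_cancel_right, ← hI₀.union hsub hb hI₁] at hU
  exact lt_irrefl _ hU

lemma not_intAct_of_not_intAct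
    (hsub : ∀ I J : Finset (Fin n), f (I ∪ J) + f (I ∩ J) ≤ f I + f J) (hik : i < k)
    (hb : b ∈ PB n f) {d : ℤ} (hd : 0 < d) (hab : a = b + Pi.single i d - Pi.single j d)
    (h : ¬ IntAct f a k) : ¬ IntAct f b k := by
  simp only [IntAct, not_forall, not_not] at h ⊢
  obtain ⟨l, hlk, hc⟩ := h
  rcases sub_single_add_single_mem_PB_or hsub hik.ne' hlk.ne hb hd hab hc with h | h
  exacts [⟨l, hlk, h⟩, ⟨i, hik, h⟩]

lemma intAct_iff_of_eq_add_single_sub_single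
    (hsub : ∀ I J : Finset (Fin n), f (I ∪ J) + f (I ∩ J) ≤ f I + f J) (hik : i < k)
    (hjk : j < k) (ha : a ∈ PB n f) (hb : b ∈ PB n f) {d : ℤ} (hd : 0 < d)
    (hab : a = b + Pi.single i d - Pi.single j d) : IntAct f a k ↔ IntAct f b k :=
  ⟨not_imp_not.mp (not_intAct_of_not_intAct hsub hjk ha hd (by rw [hab]; abel)),
    not_imp_not.mp (not_intAct_of_not_intAct hsub hik hb hd hab)⟩

end

theorem intAct_iff_of_agree_general
    (n : ℕ) (f : Finset (Fin n) → ℕ)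
    (hsub : ∀ I J : Finset (Fin n), f (I ∪ J) + f (I ∩ J) ≤ f I + f J)
    (i j : Fin n) (hij : i ≠ j)
    (a b : Fin n → ℤ) (ha : a ∈ PB n f) (hb : b ∈ PB n f)
    (hagree : ∀ t : Fin n, t ≠ i → t ≠ j → a t = b t)
    (k : Fin n) (hk : max i j < k) :
    (IntAct f a k ↔ IntAct f b k) := by
  have hik : i < k := (le_max_left i j).trans_lt hk
  have hjk : j < k := (le_max_right i j).trans_lt hk
  obtain ⟨d, hab⟩ := exists_eq_add_single_sub_single_of_agree hij hagree
    (by rw [(mem_PB_iff.mp ha).2.2, (mem_PB_iff.mp hb).2.2])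
  rcases lt_trichotomy d 0 with hd | rfl | hd
  · refine intAct_iff_of_eq_add_single_sub_single hsub hjk hik ha hb (neg_pos.mpr hd) ?_
    rw [hab, Pi.single_neg, Pi.single_neg]
    abel
  · simp only [hab, Pi.single_zero, add_zero, sub_zero]
  · exact intAct_iff_of_eq_add_single_sub_single hsub hik hjk ha hb hd hab

/-- If distinct bases `a, b` agree outside `{i, j}`, then for any `k > max {i, j}`,
`k` is internally active for `a` iff it is internally active for `b`. -/
theorem intAct_iff_of_agree
    (n : ℕ) (hn : 0 < n) (f : Finset (Fin n) → ℕ)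
    (hf0 : f ∅ = 0)
    (hmono : ∀ I J : Finset (Fin n), I ⊆ J → f I ≤ f J)
    (hsub : ∀ I J : Finset (Fin n), f (I ∪ J) + f (I ∩ J) ≤ f I + f J)
    (i j : Fin n) (hij : i ≠ j)
    (a b : Fin n → ℤ) (ha : a ∈ PB n f) (hb : b ∈ PB n f) (hab : a ≠ b)
    (hagree : ∀ t : Fin n, t ≠ i → t ≠ j → a t = b t)
    (k : Fin n) (hk : max i j < k) :
    (IntAct f a k ↔ IntAct f b k) :=
  intAct_iff_of_agree_general n f hsub i j hij a b ha hb hagree k hk
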